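/- Diagonal bound: On a network (V, E, P) with n = |V| ≥ 2 where P contains only shortest paths, for any noise mechanism D (a conditional distribution on subsets Q ⊆ P of each path P), the privacy Π(D) and utility U(D) satisfy Π(D) ≤ 1 − U(D). -/

import Mathlib

open Finset

namespace DiagAux

variable {V : Type} {G : SimpleGraph V}

lemma exists_walk_segment {u v : V} (w : G.Walk u v) (j k : ℕ) (hjk : j ≤ k)
    (hk : k ≤ w.length) :
    ∃ p : G.Walk (w.getVert j) (w.getVert k), p.length = k - j := by
  induction k with
  | zero =>
    have hj : j = 0 := Nat.le_zero.mp hjk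
    subst hj
    exact ⟨SimpleGraph.Walk.nil, by simp⟩
  | succ m ih =>
    rcases eq_or_lt_of_le hjk with rfl | h
    · exact ⟨SimpleGraph.Walk.nil, by simp⟩
    · have hm : m < w.length := lt_of_lt_of_le (Nat.lt_succ_self m) hk
      obtain ⟨p, hp⟩ := ih (Nat.lt_succ_iff.mp h) hm.le
      exact ⟨p.concat (w.adj_getVert_succ hm), by
        rw [SimpleGraph.Walk.length_concat, hp]; omega⟩

lemma reachable_getVert {u v : V} (w : G.Walk u v) (j k : ℕ) (hjk : j ≤ k)
    (hk : k ≤ w.length) : G.Reachable (w.getVert j) (w.getVert k) := by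
  obtain ⟨p, -⟩ := exists_walk_segment w j k hjk hk
  exact ⟨p⟩

lemma dist_triangle_reach {a b c : V} (h1 : G.Reachable a b) (h2 : G.Reachable b c) :
    G.dist a c ≤ G.dist a b + G.dist b c := by
  obtain ⟨p, hp⟩ := h1.exists_walk_length_eq_dist
  obtain ⟨q, hq⟩ := h2.exists_walk_length_eq_dist
  rw [← hp, ← hq, ← SimpleGraph.Walk.length_append]
  exact SimpleGraph.dist_le _

lemma geodesic_dist {u v : V} (w : G.Walk u v) (hlen : w.length = G.dist u v)
    (j k : ℕ) (hjk : j ≤ k) (hk : k ≤ w.length) :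
    G.dist (w.getVert j) (w.getVert k) = k - j := by
  obtain ⟨p, hp⟩ := exists_walk_segment w j k hjk hk
  refine le_antisymm (hp ▸ SimpleGraph.dist_le p) ?_
  -- lower bound
  have h0j : G.dist u (w.getVert j) ≤ j := by
    obtain ⟨q, hq⟩ := exists_walk_segment w 0 j (Nat.zero_le j) (le_trans hjk hk)
    have := SimpleGraph.dist_le q
    rw [hq] at this
    simpa [SimpleGraph.Walk.getVert_zero] using this
  have hkl : G.dist (w.getVert k) v ≤ w.length - k := by
    obtain ⟨q, hq⟩ := exists_walk_segment w k w.length hk le_rfl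
    have := SimpleGraph.dist_le q
    rw [hq] at this
    simpa [SimpleGraph.Walk.getVert_length] using this
  have r1 : G.Reachable u (w.getVert j) := by
    have := reachable_getVert w 0 j (Nat.zero_le j) (le_trans hjk hk)
    simpa [SimpleGraph.Walk.getVert_zero] using this
  have r2 : G.Reachable (w.getVert j) (w.getVert k) := reachable_getVert w j k hjk hk
  have r3 : G.Reachable (w.getVert k) v := by
    have := reachable_getVert w k w.length hk le_rfl
    simpa [SimpleGraph.Walk.getVert_length] using this
  have tri : G.dist u v ≤ G.dist u (w.getVert j) +
      (G.dist (w.getVert j) (w.getVert k) + G.dist (w.getVert k) v) :=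
    le_trans (dist_triangle_reach r1 (r2.trans r3))
      (by exact Nat.add_le_add_left (dist_triangle_reach r2 r3) _)
  omega

lemma darts_index {u v : V} (w : G.Walk u v) {d : G.Dart} (hd : d ∈ w.darts) :
    ∃ k, k < w.length ∧ d.toProd = (w.getVert k, w.getVert (k + 1)) := by
  induction w with
  | nil => simp [SimpleGraph.Walk.darts_nil] at hd
  | @cons a b c h p ih =>
    rw [SimpleGraph.Walk.darts_cons, List.mem_cons] at hd
    rcases hd with rfl | hd
    · refine ⟨0, by simp [SimpleGraph.Walk.length_cons], ?_⟩
      simp [SimpleGraph.Walk.getVert_zero, SimpleGraph.Walk.getVert_cons_succ]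
    · obtain ⟨k, hk, hkd⟩ := ih hd
      refine ⟨k + 1, by simp [SimpleGraph.Walk.length_cons]; omega, ?_⟩
      simpa [SimpleGraph.Walk.getVert_cons_succ] using hkd

lemma index_darts {u v : V} (w : G.Walk u v) {k : ℕ} (hk : k < w.length) :
    ∃ d ∈ w.darts, d.toProd = (w.getVert k, w.getVert (k + 1)) := by
  induction w generalizing k with
  | nil => simp at hk
  | @cons a b c h p ih =>
    cases k with
    | zero =>
      refine ⟨_, List.mem_cons_self, ?_⟩
      simp [SimpleGraph.Walk.getVert_zero, SimpleGraph.Walk.getVert_cons_succ]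
    | succ m =>
      have hm : m < p.length := by
        simpa [SimpleGraph.Walk.length_cons, Nat.succ_lt_succ_iff] using hk
      obtain ⟨d, hd, hdp⟩ := ih hm
      refine ⟨d, List.mem_cons_of_mem _ hd, ?_⟩
      simpa [SimpleGraph.Walk.getVert_cons_succ] using hdp

end DiagAux

namespace DiagAux

variable {V : Type} [Fintype V] [DecidableEq V]

/-- The source-identification predicate: `u` is a tail of some revealed edge and every
revealed edge points "away" from `u` in graph distance. -/
def srcPred (G : SimpleGraph V) (Q : Finset (V × V)) (u : V) : Prop :=
  (∃ b, (u, b) ∈ Q) ∧ ∀ p ∈ Q, G.dist u p.2 = G.dist u p.1 + 1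

/-- The (candidate) source recovered from a trace `Q`. -/
noncomputable def src (G : SimpleGraph V) (Q : Finset (V × V)) (v0 : V) : V :=
  haveI := Classical.propDecidable (∃ u, srcPred G Q u)
  if h : ∃ u, srcPred G Q u then h.choose else v0

lemma src_eq {G : SimpleGraph V} {Q : Finset (V × V)} {u : V} (v0 : V)
    (hu : srcPred G Q u) (huniq : ∀ w, srcPred G Q w → w = u) :
    src G Q v0 = u := by
  have hex : ∃ u, srcPred G Q u := ⟨u, hu⟩
  simp only [src]
  rw [dif_pos hex]
  exact huniq _ hex.choose_spec

end DiagAux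


/-- An adversarial strategy assigns, to each observed set of revealed oriented
edges, a probability distribution on the nodes. -/
def ValidAdv {V : Type} [Fintype V] [DecidableEq V]
    (A : Finset (V × V) → V → ℝ) : Prop :=
  ∀ Q, (∀ v, 0 ≤ A Q v) ∧ (∑ v, A Q v) = 1

/-- A noise mechanism assigns, to each path (indexed by `i : ι`), a probability
distribution over subsets of its oriented-edge set. -/
def ValidMech {V : Type} [Fintype V] [DecidableEq V]
    {ι : Type} (edges : ι → Finset (V × V))
    (D : ι → Finset (V × V) → ℝ) : Prop :=
  ∀ i, (∀ Q, 0 ≤ D i Q) ∧ (∑ Q ∈ (edges i).powerset, D i Q) = 1 ∧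
    ∀ Q, ¬ Q ⊆ edges i → D i Q = 0

/-- Utility U(D): minimum over paths and edges of the reveal probability. -/
noncomputable def Utility {V : Type} [Fintype V] [DecidableEq V]
    {ι : Type} (edges : ι → Finset (V × V))
    (D : ι → Finset (V × V) → ℝ) : ℝ :=
  sInf { x : ℝ | ∃ i : ι, ∃ e ∈ edges i,
    x = ∑ Q ∈ (edges i).powerset.filter (fun Q => e ∈ Q), D i Q }

/-- Adversary success on path i : Σ_{Q ⊆ P_i} D[Q|P_i]·(A[s(P_i)|Q]+A[d(P_i)|Q]). -/
def AdvSucc {V : Type} [Fintype V] [DecidableEq V]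
    {ι : Type} (s d : ι → V) (edges : ι → Finset (V × V))
    (D : ι → Finset (V × V) → ℝ) (A : Finset (V × V) → V → ℝ) (i : ι) : ℝ :=
  ∑ Q ∈ (edges i).powerset, D i Q * (A Q (s i) + A Q (d i))

/-- Privacy Π(D) = 1 − sup_A min_{P} Σ_{Q⊆P} D[Q|P]·A[∂P|Q]. -/
noncomputable def Privacy {V : Type} [Fintype V] [DecidableEq V]
    {ι : Type} (s d : ι → V) (edges : ι → Finset (V × V))
    (D : ι → Finset (V × V) → ℝ) : ℝ :=
  1 - sSup { x : ℝ | ∃ A, ValidAdv A ∧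
      x = sInf { y : ℝ | ∃ i : ι, y = AdvSucc s d edges D A i } }

/-- The diagonal bound.  The available paths are walks of a graph `G`, each of
which is a shortest path between its (distinct) endpoints.  On a network with
n = |V| ≥ 2 nodes, every noise mechanism D satisfies Π(D) ≤ 1 − U(D). -/
theorem diagonal_bound
    {V : Type} [Fintype V] [DecidableEq V] (G : SimpleGraph V)
    {ι : Type} [Fintype ι] [Nonempty ι]
    (ep : ι → V × V)
    (walk : (i : ι) → G.Walk (ep i).1 (ep i).2)
    (hshort : ∀ i, (walk i).length = G.dist (ep i).1 (ep i).2)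
    (hne : ∀ i, (ep i).1 ≠ (ep i).2)
    (edges : ι → Finset (V × V))
    (hedges : ∀ i, edges i = ((walk i).darts.map SimpleGraph.Dart.toProd).toFinset)
    (n : ℕ) (hn : n = Fintype.card V) (hn2 : 2 ≤ n)
    (D : ι → Finset (V × V) → ℝ) (hD : ValidMech edges D) :
    Privacy (fun i => (ep i).1) (fun i => (ep i).2) edges D ≤ 1 - Utility edges D := by
  classical
  have hV : Nonempty V := by
    have : 0 < Fintype.card V := by omega
    exact Fintype.card_pos_iff.mp this
  obtain ⟨v0⟩ := hV
  -- the adversary: point mass on the recovered source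
  set A : Finset (V × V) → V → ℝ :=
    fun Q v => if v = DiagAux.src G Q v0 then 1 else 0 with hAdef
  have hA : ValidAdv A := by
    intro Q
    constructor
    · intro v; dsimp [A]; split <;> norm_num
    · simp [A]
  -- lengths of walks are positive
  have hlen1 : ∀ i, 0 < (walk i).length := by
    intro i
    rcases Nat.eq_zero_or_pos (walk i).length with h | h
    · exact absurd (SimpleGraph.Walk.eq_of_length_eq_zero h) (hne i)
    · exact h
  -- membership in edge sets
  have hmem : ∀ i (e : V × V), e ∈ edges i ↔
      ∃ k, k < (walk i).length ∧ e = ((walk i).getVert k, (walk i).getVert (k + 1)) := by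
    intro i e
    rw [hedges i]
    simp only [List.mem_toFinset, List.mem_map]
    constructor
    · rintro ⟨d, hd, rfl⟩
      obtain ⟨k, hk, hkd⟩ := DiagAux.darts_index _ hd
      exact ⟨k, hk, hkd⟩
    · rintro ⟨k, hk, rfl⟩
      obtain ⟨d, hd, hdp⟩ := DiagAux.index_darts _ hk
      exact ⟨d, hd, hdp⟩
  -- the first edge of each path
  set e₀ : ι → V × V := fun i => ((ep i).1, (walk i).getVert 1) with he₀def
  have he₀ : ∀ i, e₀ i ∈ edges i := by
    intro i
    rw [hmem]
    exact ⟨0, hlen1 i, by rw [SimpleGraph.Walk.getVert_zero]⟩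
  -- the source-identification lemma
  have hsrc : ∀ i (Q : Finset (V × V)), Q ⊆ edges i → e₀ i ∈ Q →
      DiagAux.src G Q v0 = (ep i).1 := by
    intro i Q hQ hQ0
    have gd : ∀ {j k : ℕ}, j ≤ k → k ≤ (walk i).length →
        G.dist ((walk i).getVert j) ((walk i).getVert k) = k - j :=
      fun hjk hk => DiagAux.geodesic_dist (walk i) (hshort i) _ _ hjk hk
    have hgv0 : (walk i).getVert 0 = (ep i).1 := SimpleGraph.Walk.getVert_zero _
    have hps : DiagAux.srcPred G Q (ep i).1 := by
      constructor
      · exact ⟨(walk i).getVert 1, hQ0⟩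
      · rintro ⟨a, b⟩ hab
        obtain ⟨k, hk, he⟩ := (hmem i (a, b)).mp (hQ hab)
        have ha : a = (walk i).getVert k := congrArg Prod.fst he
        have hb : b = (walk i).getVert (k + 1) := congrArg Prod.snd he
        have h1 := gd (Nat.zero_le (k + 1)) hk
        have h2 := gd (Nat.zero_le k) hk.le
        rw [hgv0] at h1 h2
        show G.dist (ep i).1 b = G.dist (ep i).1 a + 1
        rw [ha, hb, h1, h2]
        omega
    refine DiagAux.src_eq v0 hps ?_
    intro u hu
    obtain ⟨⟨b0, hb0⟩, hprop⟩ := hu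
    obtain ⟨k, hk, he⟩ := (hmem i (u, b0)).mp (hQ hb0)
    have hu' : u = (walk i).getVert k := congrArg Prod.fst he
    rcases Nat.eq_zero_or_pos k with rfl | hkpos
    · rw [hu', hgv0]
    · exfalso
      have h1 := hprop (e₀ i) hQ0
      have hdus : G.dist u (ep i).1 = k := by
        have h2 := gd (Nat.zero_le k) hk.le
        rw [hgv0] at h2
        rw [hu', SimpleGraph.dist_comm, h2]
        omega
      have hd1 : G.dist u ((walk i).getVert 1) = k - 1 := by
        rw [hu', SimpleGraph.dist_comm]
        exact gd hkpos hk.le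
      simp only [he₀def] at h1
      omega
  -- adversary success dominates the reveal probability of the first edge
  have hAs : ∀ i, (∑ Q ∈ (edges i).powerset.filter (fun Q => e₀ i ∈ Q), D i Q) ≤
      AdvSucc (fun i => (ep i).1) (fun i => (ep i).2) edges D A i := by
    intro i
    rw [AdvSucc]
    refine le_trans (Finset.sum_le_sum ?_)
      (Finset.sum_le_sum_of_subset_of_nonneg (Finset.filter_subset _ _) ?_)
    · intro Q hQ
      rw [Finset.mem_filter, Finset.mem_powerset] at hQ
      have h1 : A Q (ep i).1 = 1 := by
        simp [A, hsrc i Q hQ.1 hQ.2]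
      have h2 : 0 ≤ A Q (ep i).2 := (hA Q).1 _
      have h3 : (1 : ℝ) ≤ A Q (ep i).1 + A Q (ep i).2 := by rw [h1]; linarith
      calc D i Q = D i Q * 1 := (mul_one _).symm
        _ ≤ D i Q * (A Q (ep i).1 + A Q (ep i).2) :=
            mul_le_mul_of_nonneg_left h3 ((hD i).1 Q)
    · intro Q _ _
      exact mul_nonneg ((hD i).1 Q) (add_nonneg ((hA Q).1 _) ((hA Q).1 _))
  -- utility is at most the reveal probability of the first edge
  have hTb : BddBelow { x : ℝ | ∃ i : ι, ∃ e ∈ edges i,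
      x = ∑ Q ∈ (edges i).powerset.filter (fun Q => e ∈ Q), D i Q } := by
    refine ⟨0, ?_⟩
    rintro x ⟨i, e, he, rfl⟩
    exact Finset.sum_nonneg fun Q _ => (hD i).1 Q
  have hUle : ∀ i, Utility edges D ≤
      ∑ Q ∈ (edges i).powerset.filter (fun Q => e₀ i ∈ Q), D i Q := by
    intro i
    exact csInf_le hTb ⟨i, e₀ i, he₀ i, rfl⟩
  -- the inner infimum for our adversary
  have hYne : { y : ℝ | ∃ i : ι,
      y = AdvSucc (fun i => (ep i).1) (fun i => (ep i).2) edges D A i }.Nonempty :=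
    ⟨_, Classical.arbitrary ι, rfl⟩
  have hUx : Utility edges D ≤ sInf { y : ℝ | ∃ i : ι,
      y = AdvSucc (fun i => (ep i).1) (fun i => (ep i).2) edges D A i } := by
    refine le_csInf hYne ?_
    rintro y ⟨i, rfl⟩
    exact le_trans (hUle i) (hAs i)
  -- the sup set is bounded above and contains our value
  have hmemS : sInf { y : ℝ | ∃ i : ι,
        y = AdvSucc (fun i => (ep i).1) (fun i => (ep i).2) edges D A i } ∈
      { x : ℝ | ∃ A', ValidAdv A' ∧ x = sInf { y : ℝ | ∃ i : ι,
        y = AdvSucc (fun i => (ep i).1) (fun i => (ep i).2) edges D A' i } } :=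
    ⟨A, hA, rfl⟩
  have hSb : BddAbove { x : ℝ | ∃ A', ValidAdv A' ∧ x = sInf { y : ℝ | ∃ i : ι,
      y = AdvSucc (fun i => (ep i).1) (fun i => (ep i).2) edges D A' i } } := by
    refine ⟨2, ?_⟩
    rintro x ⟨A', hA', rfl⟩
    have hb : BddBelow { y : ℝ | ∃ i : ι,
        y = AdvSucc (fun i => (ep i).1) (fun i => (ep i).2) edges D A' i } := by
      refine ⟨0, ?_⟩
      rintro y ⟨i, rfl⟩
      exact Finset.sum_nonneg fun Q _ =>
        mul_nonneg ((hD i).1 Q) (add_nonneg ((hA' Q).1 _) ((hA' Q).1 _))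
    set i0 := Classical.arbitrary ι
    refine le_trans (csInf_le hb ⟨i0, rfl⟩) ?_
    have hle1 : ∀ (Q : Finset (V × V)) (v : V), A' Q v ≤ 1 := by
      intro Q v
      have := Finset.single_le_sum (fun w _ => (hA' Q).1 w) (Finset.mem_univ v)
      rw [(hA' Q).2] at this
      exact this
    calc AdvSucc (fun i => (ep i).1) (fun i => (ep i).2) edges D A' i0
        ≤ ∑ Q ∈ (edges i0).powerset, D i0 Q * 2 := by
          refine Finset.sum_le_sum ?_
          intro Q _
          refine mul_le_mul_of_nonneg_left ?_ ((hD i0).1 Q)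
          have := hle1 Q ((ep i0).1)
          have := hle1 Q ((ep i0).2)
          linarith
      _ = 2 := by
          rw [← Finset.sum_mul, (hD i0).2.1, one_mul]
  have hfin : Utility edges D ≤ sSup { x : ℝ | ∃ A', ValidAdv A' ∧ x = sInf { y : ℝ | ∃ i : ι,
      y = AdvSucc (fun i => (ep i).1) (fun i => (ep i).2) edges D A' i } } :=
    le_trans hUx (le_csSup hSb hmemS)
  rw [Privacy]
  linarith
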